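/- Let n be a positive integer, λ_1, …, λ_n > 0, β_1, …, β_n > 0, and p_1, …, p_n > 0 with p_1 + ⋯ + p_n = 1, and let f(t) = Σ_{i=1}^n p_i h(t; λ_i, β_i) for t ∈ (0,1). Then: (1) if β_i > 1 for all i, then f(t) → 0 as t → 0+; (2) if β_i ≥ 1 for all i and β_i = 1 for at least one i, then f(t) → Σ_{i : β_i = 1} p_i λ_i as t → 0+; (3) if β_i < 1 for at least one i, then f(t) → +∞ as t → 0+. -/

import Mathlib

/-!
Near `t = 0` the Kies density `h(t; λ, β)` equals `λ β t ^ (β - 1)` times a factor that is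
continuous at `0` with value `1`. So each component tends to `0`, to `λ`, or to `+∞` according as
`β > 1`, `β = 1` or `β < 1`, and the mixture inherits the limit of the sum; in the last case the
other components are nonnegative on `(0, 1)` and cannot offset the divergent one.
-/

open Filter Set Real Topology

noncomputable def kiesDensity (l b t : ℝ) : ℝ :=
  l * b * t ^ (b - 1) * (1 - t) ^ (-(b + 1)) * exp (-l * (t / (1 - t)) ^ b)

section KiesDensity

variable {l b t : ℝ}

lemma kiesDensity_eq_mul_rpow_mul (l b t : ℝ) :
    kiesDensity l b t =
      l * b * (t ^ (b - 1) * ((1 - t) ^ (-(b + 1)) * exp (-l * (t / (1 - t)) ^ b))) := by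
  unfold kiesDensity
  ring

lemma tendsto_one_sub_rpow_mul_exp_nhds_zero (a l : ℝ) (hb : 0 < b) :
    Tendsto (fun t : ℝ => (1 - t) ^ a * exp (-l * (t / (1 - t)) ^ b)) (𝓝 0) (𝓝 1) := by
  have hcont : ContinuousAt (fun t : ℝ => (1 - t) ^ a * exp (-l * (t / (1 - t)) ^ b)) 0 := by
    have hquot : ContinuousAt (fun t : ℝ => t / (1 - t)) 0 :=
      continuousAt_id.div (continuousAt_const.sub continuousAt_id) (by norm_num)
    exact ((continuousAt_const.sub continuousAt_id).rpow_const (by norm_num)).mul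
      (continuous_exp.continuousAt.comp (continuousAt_const.mul (hquot.rpow_const (.inr hb.le))))
  simpa [zero_rpow hb.ne'] using hcont.tendsto

lemma tendsto_kiesDensity_of_one_lt (l : ℝ) (hb : 1 < b) :
    Tendsto (kiesDensity l b) (𝓝[>] 0) (𝓝 0) := by
  have hpow : Tendsto (fun t : ℝ => t ^ (b - 1)) (𝓝[>] 0) (𝓝 0) := by
    have := (continuousAt_rpow_const 0 (b - 1) (.inr (by linarith))).tendsto
    rw [zero_rpow (by linarith)] at this
    exact this.mono_left nhdsWithin_le_nhds
  have hfactor := (tendsto_one_sub_rpow_mul_exp_nhds_zero (-(b + 1)) l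
    (by linarith : 0 < b)).mono_left (nhdsWithin_le_nhds (s := Ioi 0))
  simpa [funext (kiesDensity_eq_mul_rpow_mul l b)] using (hpow.mul hfactor).const_mul (l * b)

lemma tendsto_kiesDensity_one (l : ℝ) :
    Tendsto (kiesDensity l 1) (𝓝[>] 0) (𝓝 l) := by
  have hfactor := (tendsto_one_sub_rpow_mul_exp_nhds_zero (-(1 + 1)) l one_pos).mono_left
    (nhdsWithin_le_nhds (s := Ioi 0))
  simpa [funext (kiesDensity_eq_mul_rpow_mul l 1)] using hfactor.const_mul l

lemma tendsto_kiesDensity_of_lt_one (hl : 0 < l) (hb₀ : 0 < b) (hb : b < 1) :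
    Tendsto (kiesDensity l b) (𝓝[>] 0) atTop := by
  have hfactor := (tendsto_one_sub_rpow_mul_exp_nhds_zero (-(b + 1)) l hb₀).mono_left
    (nhdsWithin_le_nhds (s := Ioi 0))
  rw [funext (kiesDensity_eq_mul_rpow_mul l b)]
  exact ((tendsto_rpow_neg_nhdsGT_zero (by linarith)).atTop_mul_pos one_pos
    hfactor).const_mul_atTop (mul_pos hl hb₀)

lemma tendsto_kiesDensity_of_one_le (l : ℝ) (hb : 1 ≤ b) :
    Tendsto (kiesDensity l b) (𝓝[>] 0) (𝓝 (if b = 1 then l else 0)) := by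
  rcases hb.eq_or_lt with rfl | hb
  · simpa using tendsto_kiesDensity_one l
  · simpa [hb.ne'] using tendsto_kiesDensity_of_one_lt l hb

lemma kiesDensity_nonneg (hl : 0 ≤ l) (hb : 0 ≤ b) (ht₀ : 0 ≤ t) (ht₁ : t ≤ 1) :
    0 ≤ kiesDensity l b t := by
  rw [kiesDensity_eq_mul_rpow_mul]
  have := rpow_nonneg (sub_nonneg.mpr ht₁) (-(b + 1))
  have := rpow_nonneg ht₀ (b - 1)
  positivity

end KiesDensity

section KiesMixture

variable {ι : Type*} (s : Finset ι) (p l b : ι → ℝ)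

lemma tendsto_kiesMixture_of_one_le (hb : ∀ i ∈ s, 1 ≤ b i) :
    Tendsto (fun t => ∑ i ∈ s, p i * kiesDensity (l i) (b i) t) (𝓝[>] 0)
      (𝓝 (∑ i ∈ s with b i = 1, p i * l i)) := by
  rw [Finset.sum_filter]
  refine tendsto_finsetSum s fun i hi => ?_
  simpa [mul_ite] using (tendsto_kiesDensity_of_one_le (l i) (hb i hi)).const_mul (p i)

lemma tendsto_kiesMixture_of_lt_one (hp : ∀ i ∈ s, 0 < p i) (hl : ∀ i ∈ s, 0 < l i)
    (hb : ∀ i ∈ s, 0 < b i) {j : ι} (hj : j ∈ s) (hbj : b j < 1) :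
    Tendsto (fun t => ∑ i ∈ s, p i * kiesDensity (l i) (b i) t) (𝓝[>] 0) atTop := by
  have hcomponent := (tendsto_kiesDensity_of_lt_one (hl j hj) (hb j hj) hbj).const_mul_atTop
    (hp j hj)
  refine tendsto_atTop_mono' _ ?_ hcomponent
  filter_upwards [Ioo_mem_nhdsGT one_pos] with t ht
  refine Finset.single_le_sum (f := fun i => p i * kiesDensity (l i) (b i) t)
    (fun i hi => ?_) hj
  exact mul_nonneg (hp i hi).le
    (kiesDensity_nonneg (hl i hi).le (hb i hi).le ht.1.le ht.2.le)

end KiesMixture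

open scoped Classical in
theorem discrete_kies_mixture_left_endpoint_general
    (n : ℕ) (lam beta p : Fin n → ℝ)
    (hlam : ∀ i, 0 < lam i) (hbeta : ∀ i, 0 < beta i) (hp : ∀ i, 0 < p i)
    (f : ℝ → ℝ)
    (hf : ∀ t, f t = ∑ i, p i * (lam i * beta i * t ^ (beta i - 1) *
        (1 - t) ^ (-(beta i + 1)) * Real.exp (-(lam i) * (t / (1 - t)) ^ (beta i)))) :
    ((∀ i, 1 < beta i) → Tendsto f (nhdsWithin 0 (Set.Ioi 0)) (nhds 0)) ∧
    ((∀ i, 1 ≤ beta i) → (∃ i, beta i = 1) →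
        Tendsto f (nhdsWithin 0 (Set.Ioi 0))
          (nhds (∑ i ∈ Finset.univ.filter (fun i => beta i = 1), p i * lam i))) ∧
    ((∃ i, beta i < 1) → Tendsto f (nhdsWithin 0 (Set.Ioi 0)) atTop) := by
  obtain rfl : f = fun t => ∑ i, p i * kiesDensity (lam i) (beta i) t := funext hf
  refine ⟨fun hgt => ?_, fun hge _ => ?_, fun ⟨j, hj⟩ => ?_⟩
  · have hnone : Finset.univ.filter (fun i => beta i = 1) = ∅ :=
      Finset.filter_eq_empty_iff.mpr fun i _ => (hgt i).ne'
    simpa [hnone] using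
      tendsto_kiesMixture_of_one_le Finset.univ p lam beta fun i _ => (hgt i).le
  · convert tendsto_kiesMixture_of_one_le Finset.univ p lam beta fun i _ => hge i
  · exact tendsto_kiesMixture_of_lt_one Finset.univ p lam beta (fun i _ => hp i)
      (fun i _ => hlam i) (fun i _ => hbeta i) (Finset.mem_univ j) hj

open scoped Classical in
theorem discrete_kies_mixture_left_endpoint
    (n : ℕ) (hn : 0 < n) (lam beta p : Fin n → ℝ)
    (hlam : ∀ i, 0 < lam i) (hbeta : ∀ i, 0 < beta i) (hp : ∀ i, 0 < p i)
    (hsum : ∑ i, p i = 1)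
    (f : ℝ → ℝ)
    (hf : ∀ t, f t = ∑ i, p i * (lam i * beta i * t ^ (beta i - 1) *
        (1 - t) ^ (-(beta i + 1)) * Real.exp (-(lam i) * (t / (1 - t)) ^ (beta i)))) :
    ((∀ i, 1 < beta i) → Tendsto f (nhdsWithin 0 (Set.Ioi 0)) (nhds 0)) ∧
    ((∀ i, 1 ≤ beta i) → (∃ i, beta i = 1) →
        Tendsto f (nhdsWithin 0 (Set.Ioi 0))
          (nhds (∑ i ∈ Finset.univ.filter (fun i => beta i = 1), p i * lam i))) ∧
    ((∃ i, beta i < 1) → Tendsto f (nhdsWithin 0 (Set.Ioi 0)) atTop) :=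
  discrete_kies_mixture_left_endpoint_general n lam beta p hlam hbeta hp f hf
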